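/- Let a, b, c ∈ ℂ. The ℂ-bilinear product ∘ on A defined on basis elements by L_m∘L_n = cL_{m+n+1} − (n+1)L_{m+n}, L_m∘W_n = ((a−2)(m+1)−(n+1))W_{m+n} + (b+c)W_{m+n+1}, W_m∘L_n = −(n+1)W_{m+n} + cW_{m+n+1} and W_m∘W_n = 0 is left-symmetric, and it is a compatible left-symmetric algebraic structure on the Lie algebra Coeff(W(a,b)). -/

import Mathlib

/-!
Left-symmetry and compatibility are multilinear identities in their arguments (the associator
is a trilinear map), so it suffices to check them on the basis `{L m} ∪ {W m}`. There each one
is an identity between finitely many basis vectors with coefficients polynomial in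
`a, b, c, m, n, p`.
-/

noncomputable section

/-- `A` is the free `ℂ`-vector space with basis `{L m : m ∈ ℤ} ∪ {W m : m ∈ ℤ}`. -/
abbrev A : Type := (ℤ ⊕ ℤ) →₀ ℂ

/-- The basis vector `L m`. -/
def L (m : ℤ) : A := Finsupp.single (Sum.inl m) 1

/-- The basis vector `W m`. -/
def W (m : ℤ) : A := Finsupp.single (Sum.inr m) 1

namespace LinearMap

variable {R V ι : Type*} [CommRing R] [AddCommGroup V] [Module R V]

def associator (μ : V →ₗ[R] V →ₗ[R] V) : V →ₗ[R] V →ₗ[R] V →ₗ[R] V :=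
  μ.compr₂ μ - (llcomp R V V V ∘ₗ μ).compl₂ μ

@[simp]
theorem associator_apply (μ : V →ₗ[R] V →ₗ[R] V) (x y z : V) :
    μ.associator x y z = μ (μ x y) z - μ x (μ y z) :=
  rfl

theorem leftSymmetric_of_basis (b : Module.Basis ι R V) (μ : V →ₗ[R] V →ₗ[R] V)
    (h : ∀ i j k, μ (μ (b i) (b j)) (b k) - μ (b i) (μ (b j) (b k)) =
      μ (μ (b j) (b i)) (b k) - μ (b j) (μ (b i) (b k)))
    (x y z : V) : μ (μ x y) z - μ x (μ y z) = μ (μ y x) z - μ y (μ x z) := by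
  have : μ.associator = μ.associator.flip :=
    ext_basis b b fun i j => b.ext fun k => h i j k
  simpa using congr($this x y z)

theorem sub_flip_eq_of_basis (b : Module.Basis ι R V) (μ β : V →ₗ[R] V →ₗ[R] V)
    (h : ∀ i j, μ (b i) (b j) - μ (b j) (b i) = β (b i) (b j)) (x y : V) :
    μ x y - μ y x = β x y := by
  have : μ - μ.flip = β := ext_basis b b h
  simpa using congr($this x y)

end LinearMap

def basisLW : Module.Basis (ℤ ⊕ ℤ) ℂ A := Finsupp.basisSingleOne

@[simp] theorem basisLW_inl (m : ℤ) : basisLW (.inl m) = L m := by simp [basisLW, L]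

@[simp] theorem basisLW_inr (m : ℤ) : basisLW (.inr m) = W m := by simp [basisLW, W]

/-- Corollary 3.8 (3). -/
theorem stmt14 (a b c : ℂ)
    -- `M` is the ℂ-bilinear product `∘` given on basis elements by:
    (M : A →ₗ[ℂ] A →ₗ[ℂ] A)
    (hLL : ∀ m n : ℤ, M (L m) (L n) = c • L (m + n + 1) - ((n : ℂ) + 1) • L (m + n))
    (hLW : ∀ m n : ℤ, M (L m) (W n) =
      ((a - 2) * ((m : ℂ) + 1) - ((n : ℂ) + 1)) • W (m + n) + (b + c) • W (m + n + 1))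
    (hWL : ∀ m n : ℤ, M (W m) (L n) = -((n : ℂ) + 1) • W (m + n) + c • W (m + n + 1))
    (hWW : ∀ m n : ℤ, M (W m) (W n) = 0)
    -- `B` is the ℂ-bilinear Lie bracket of Coeff(W(a,b)) on basis elements:
    (B : A →ₗ[ℂ] A →ₗ[ℂ] A)
    (hBLL : ∀ m n : ℤ, B (L m) (L n) = ((m : ℂ) - (n : ℂ)) • L (m + n))
    (hBLW : ∀ m n : ℤ, B (L m) (W n) =
      (((m : ℂ) + 1) * (a - 1) - ((n : ℂ) + 1)) • W (m + n)
        + b • W (m + n + 1))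
    (hBWL : ∀ m n : ℤ, B (W n) (L m) = -B (L m) (W n))
    (hBWW : ∀ m n : ℤ, B (W m) (W n) = 0) :
    -- `∘ = M` is left-symmetric:
    ((∀ x y z : A, M (M x y) z - M x (M y z) = M (M y x) z - M y (M x z)) ∧
    -- and compatible with the Lie bracket:
    (∀ x y : A, M x y - M y x = B x y)) := by
  refine ⟨M.leftSymmetric_of_basis basisLW ?_, M.sub_flip_eq_of_basis basisLW B ?_⟩
  -- `ring_nf` also normalizes the indices, so that e.g. `L (m + (n + p + 1))` and
  -- `L (m + n + 1 + p)` become the same vector for `module`.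
  · rintro (m | m) (n | n) (p | p) <;>
      simp only [basisLW_inl, basisLW_inr, hLL, hLW, hWL, hWW, map_add, map_sub, map_smul,
        map_zero, LinearMap.add_apply, LinearMap.sub_apply, LinearMap.smul_apply,
        LinearMap.zero_apply, sub_self] <;>
      ring_nf <;> module
  · rintro (m | m) (n | n) <;>
      simp only [basisLW_inl, basisLW_inr, hLL, hLW, hWL, hWW, hBLL, hBLW, hBWL, hBWW,
        sub_self] <;>
      ring_nf <;> module

end
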